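/- The 2-set agreement task for three agents is not solvable by the one-round immediate snapshot action model IS: for the input simplicial model I over three agents with input values from {0,1,2}, there is no morphism of simplicial models δ : I[IS] → I[𝒯] with π_I ∘ δ = π_I, where 𝒯 is the 2-set agreement task. -/

import Mathlib

/-! ### Chromatic simplicial complexes and Kripke frames -/

/-- A chromatic simplicial complex over the set of agents `A`, on the vertex type `V`. -/
structure CSC (A V : Type) where
  simplexes : Set (Set V)
  nonempty_mem : ∀ X ∈ simplexes, X.Nonempty
  finite_mem : ∀ X ∈ simplexes, X.Finite
  down_closed : ∀ X ∈ simplexes, ∀ Y : Set V, Y ⊆ X → Y.Nonempty → Y ∈ simplexes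
  color : V → A
  chromatic : ∀ X ∈ simplexes, Set.InjOn color X

namespace CSC

variable {A V W : Type}

/-- A vertex of the complex. -/
def IsVertex (C : CSC A V) (v : V) : Prop := {v} ∈ C.simplexes

/-- A facet: a maximal simplex. -/
def IsFacet (C : CSC A V) (X : Set V) : Prop :=
  X ∈ C.simplexes ∧ ∀ Y ∈ C.simplexes, X ⊆ Y → X = Y

/-- A pure chromatic simplicial complex of dimension `n`: all facets have `n+1` vertices. -/
def Pure (C : CSC A V) (n : ℕ) : Prop :=
  ∀ X, C.IsFacet X → X.ncard = n + 1

/-- A chromatic simplicial map: sends simplexes to simplexes and preserves colors. -/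
def IsChromMap (C : CSC A V) (D : CSC A W) (f : V → W) : Prop :=
  (∀ X ∈ C.simplexes, f '' X ∈ D.simplexes) ∧
  (∀ v, C.IsVertex v → D.color (f v) = C.color v)

/-- The type of facets of a complex. -/
def Facets (C : CSC A V) : Type := {X : Set V // C.IsFacet X}

/-- The vertices of a complex, as a type. -/
abbrev Vertices (C : CSC A V) : Type := {v : V // C.IsVertex v}

end CSC

/-- A Kripke frame over the set of agents `A` with states `S`:
a family of equivalence (indistinguishability) relations indexed by agents. -/
structure KFrame (A S : Type) where
  rel : A → S → S → Prop
  isEquiv : ∀ a, Equivalence (rel a)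

namespace KFrame

/-- A Kripke frame is proper if any two distinct states are distinguished by some agent. -/
def Proper {A S : Type} (M : KFrame A S) : Prop := ∀ s t : S, (∀ a, M.rel a s t) → s = t

/-- A morphism of Kripke frames. -/
def IsMorphism {A S T : Type} (M : KFrame A S) (N : KFrame A T) (f : S → T) : Prop :=
  ∀ a u v, M.rel a u v → N.rel a (f u) (f v)

end KFrame


lemma CSC.isVertex_of_mem {A V : Type} (C : CSC A V) {X : Set V} {v : V}
    (hX : X ∈ C.simplexes) (hv : v ∈ X) : C.IsVertex v :=
  C.down_closed X hX {v} (by simpa using hv) ⟨v, rfl⟩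

/-! ### Basic facts about pure chromatic complexes over `n+1` agents -/

namespace CSC

variable {n : ℕ} {V : Type}

lemma ncard_le_of_mem (C : CSC (Fin (n+1)) V) {X : Set V} (hX : X ∈ C.simplexes) :
    X.ncard ≤ n + 1 := by
  have h1 : (C.color '' X).ncard = X.ncard := Set.ncard_image_of_injOn (C.chromatic X hX)
  calc X.ncard = (C.color '' X).ncard := h1.symm
    _ ≤ (Set.univ : Set (Fin (n+1))).ncard :=
        Set.ncard_le_ncard (Set.subset_univ _) Set.finite_univ
    _ = n + 1 := by rw [Set.ncard_univ]; simp

/-- Every simplex of a chromatic complex over `n+1` agents is contained in a facet. -/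
lemma exists_facet_above (C : CSC (Fin (n+1)) V) :
    ∀ (k : ℕ) (X : Set V), X ∈ C.simplexes → n + 1 ≤ X.ncard + k →
      ∃ Y, C.IsFacet Y ∧ X ⊆ Y := by
  intro k
  induction k with
  | zero =>
    intro X hX hle
    refine ⟨X, ⟨hX, ?_⟩, subset_rfl⟩
    intro Y hY hXY
    exact (Set.eq_of_subset_of_ncard_le hXY
      (le_trans (C.ncard_le_of_mem hY) (by omega)) (C.finite_mem Y hY))
  | succ k ih =>
    intro X hX hle
    by_cases hf : C.IsFacet X
    · exact ⟨X, hf, subset_rfl⟩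
    · simp only [IsFacet, hX, true_and] at hf
      push_neg at hf
      obtain ⟨Y, hY, hXY, hne⟩ := hf
      have hlt : X.ncard < Y.ncard :=
        Set.ncard_lt_ncard (ssubset_of_subset_of_ne hXY hne) (C.finite_mem Y hY)
      obtain ⟨Z, hZ, hYZ⟩ := ih Y hY (by omega)
      exact ⟨Z, hZ, hXY.trans hYZ⟩

lemma mem_facet (C : CSC (Fin (n+1)) V) {X : Set V} (hX : X ∈ C.simplexes) :
    ∃ Y, C.IsFacet Y ∧ X ⊆ Y :=
  C.exists_facet_above (n+1) X hX (by omega)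

/-- In a pure complex of dimension `n` over `n+1` agents, every facet contains a vertex
of each color. -/
lemma facet_exists_color (C : CSC (Fin (n+1)) V) (hp : C.Pure n)
    {X : Set V} (hX : C.IsFacet X) (a : Fin (n+1)) : ∃ v ∈ X, C.color v = a := by
  have himg : (C.color '' X).ncard = n + 1 := by
    rw [Set.ncard_image_of_injOn (C.chromatic X hX.1)]
    exact hp X hX
  have huniv : C.color '' X = Set.univ := by
    apply Set.eq_of_subset_of_ncard_le (Set.subset_univ _) ?_ Set.finite_univ
    rw [himg, Set.ncard_univ]; simp
  have ha : a ∈ C.color '' X := by rw [huniv]; trivial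
  obtain ⟨v, hv, hc⟩ := ha
  exact ⟨v, hv, hc⟩

end CSC

/-! ### The functor F : from pure chromatic simplicial complexes to Kripke frames. -/

/-- The Kripke frame associated with a pure chromatic simplicial complex: states are the
facets, and two facets are indistinguishable by agent `a` iff they share an `a`-colored
vertex. -/
def kframeOf {n : ℕ} {V : Type} (C : CSC (Fin (n+1)) V) (hp : C.Pure n) :
    KFrame (Fin (n+1)) C.Facets where
  rel a X Y := ∃ v, v ∈ X.1 ∩ Y.1 ∧ C.color v = a
  isEquiv a := by
    constructor
    · intro X
      obtain ⟨v, hv, hc⟩ := C.facet_exists_color hp X.2 a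
      exact ⟨v, ⟨hv, hv⟩, hc⟩
    · rintro X Y ⟨v, ⟨h1, h2⟩, hc⟩
      exact ⟨v, ⟨h2, h1⟩, hc⟩
    · rintro X Y Z ⟨v, ⟨hvX, hvY⟩, hcv⟩ ⟨w, ⟨hwY, hwZ⟩, hcw⟩
      have hvw : v = w := C.chromatic Y.1 Y.2.1 hvY hwY (by rw [hcv, hcw])
      exact ⟨v, ⟨hvX, by rw [hvw]; exact hwZ⟩, hcv⟩

lemma kframeOf_proper {n : ℕ} {V : Type} (C : CSC (Fin (n+1)) V) (hp : C.Pure n) :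
    (kframeOf C hp).Proper := by
  have key : ∀ Z W : C.Facets, (∀ a, ∃ v, v ∈ Z.1 ∩ W.1 ∧ C.color v = a) → W.1 ⊆ Z.1 := by
    intro Z W hzw w hw
    obtain ⟨v, ⟨hvZ, hvW⟩, hcv⟩ := hzw (C.color w)
    have : v = w := C.chromatic W.1 W.2.1 hvW hw hcv
    exact this ▸ hvZ
  intro X Y h
  apply Subtype.ext
  apply Set.Subset.antisymm
  · apply key Y X
    intro a
    obtain ⟨v, hv, hc⟩ := h a
    exact ⟨v, ⟨hv.2, hv.1⟩, hc⟩
  · exact key X Y h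

/-! ### The epistemic language `𝓛_K` -/

/-- Epistemic formulas over agents `A` and atomic propositions `AP`:
`φ ::= p | ¬φ | (φ ∧ φ) | K_a φ`. -/
inductive Form (A AP : Type) : Type
  | atom : AP → Form A AP
  | neg : Form A AP → Form A AP
  | and : Form A AP → Form A AP → Form A AP
  | K : A → Form A AP → Form A AP

namespace Form

variable {A AP : Type}

/-- Implication, as a derived connective. -/
def imp (φ ψ : Form A AP) : Form A AP := .neg (.and φ (.neg ψ))

/-- Disjunction, as a derived connective. -/
def or (φ ψ : Form A AP) : Form A AP := .neg (.and (.neg φ) (.neg ψ))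

/-- A false formula. -/
def falsum [Inhabited AP] : Form A AP := .and (.atom default) (.neg (.atom default))

/-- A true formula. -/
def verum [Inhabited AP] : Form A AP := .neg falsum

end Form

/-- Finite disjunctions. -/
def bigOr {A AP : Type} [Inhabited AP] (l : List (Form A AP)) : Form A AP :=
  l.foldr Form.or Form.falsum

/-- Finite conjunctions. -/
def bigAnd {A AP : Type} [Inhabited AP] (l : List (Form A AP)) : Form A AP :=
  l.foldr Form.and Form.verum

/-! ### Simplicial models and their semantics.
Atomic propositions are pairs `(a, x)`: "agent `a` holds the value `x`". -/

/-- A simplicial model: a chromatic simplicial complex together with a labeling of each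
vertex by a set of atomic propositions concerning the agent coloring that vertex. -/
structure SModel (A V Val : Type) extends CSC A V where
  label : V → Set (A × Val)
  label_local : ∀ v, toCSC.IsVertex v → ∀ p ∈ label v, p.1 = color v

namespace SModel

variable {A V W Val : Type}

/-- Satisfaction of a formula at a facet of a simplicial model. -/
def sat (M : SModel A V Val) : Set V → Form A (A × Val) → Prop
  | X, .atom p => ∃ v ∈ X, p ∈ M.label v
  | X, .neg φ => ¬ M.sat X φ
  | X, .and φ ψ => M.sat X φ ∧ M.sat X ψ
  | X, .K a φ => ∀ Y, M.toCSC.IsFacet Y → (∃ v, v ∈ X ∩ Y ∧ M.color v = a) → M.sat Y φ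

/-- A morphism of simplicial models: a chromatic simplicial map preserving the labeling. -/
def IsMorphism (M : SModel A V Val) (N : SModel A W Val) (f : V → W) : Prop :=
  M.toCSC.IsChromMap N.toCSC f ∧ ∀ v, M.toCSC.IsVertex v → N.label (f v) = M.label v

end SModel

/-! ### Chromatic products -/

/-- The chromatic product of a set of vertices of `V` and a set of vertices of `W`:
pairs of vertices with matching colors. -/
def chromPair {A V W : Type} (cV : V → A) (cW : W → A) (X : Set V) (Y : Set W) :
    Set (V × W) :=
  {p | p.1 ∈ X ∧ p.2 ∈ Y ∧ cV p.1 = cW p.2}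

/-- The chromatic product of two facets of pure complexes over `n+1` agents has `n+1`
elements. -/
lemma CSC.ncard_chromPair {n : ℕ} {V W : Type} (C : CSC (Fin (n+1)) V)
    (D : CSC (Fin (n+1)) W) (hpC : C.Pure n) (hpD : D.Pure n)
    {X : Set V} {Y : Set W} (hX : C.IsFacet X) (hY : D.IsFacet Y) :
    (chromPair C.color D.color X Y).ncard = n + 1 := by
  have hinj : Set.InjOn Prod.fst (chromPair C.color D.color X Y) := by
    rintro p ⟨hp1, hp2, hpc⟩ q ⟨hq1, hq2, hqc⟩ h
    have h2 : p.2 = q.2 := D.chromatic Y hY.1 hp2 hq2 (by rw [← hpc, ← hqc, h])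
    exact Prod.ext h h2
  have himg : Prod.fst '' chromPair C.color D.color X Y = X := by
    apply Set.Subset.antisymm
    · rintro u ⟨p, hp, rfl⟩
      exact hp.1
    · intro u hu
      obtain ⟨w, hw, hcw⟩ := D.facet_exists_color hpD hY (C.color u)
      exact ⟨(u, w), ⟨hu, hw, hcw.symm⟩, rfl⟩
  rw [← Set.ncard_image_of_injOn hinj, himg]
  exact hpC X hX

lemma CSC.chromPair_nonempty {n : ℕ} {V W : Type} (C : CSC (Fin (n+1)) V)
    (D : CSC (Fin (n+1)) W) (hpD : D.Pure n)
    {X : Set V} {Y : Set W} (hX : C.IsFacet X) (hY : D.IsFacet Y) :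
    (chromPair C.color D.color X Y).Nonempty := by
  obtain ⟨u, hu⟩ := C.nonempty_mem X hX.1
  obtain ⟨w, hw, hcw⟩ := D.facet_exists_color hpD hY (C.color u)
  exact ⟨(u, w), hu, hw, hcw.symm⟩

/-! ### Simplicial action models and the simplicial product update -/

/-- A simplicial action model: a chromatic simplicial complex of actions together with a
precondition formula for each facet. -/
structure SActModel (A W Val : Type) extends CSC A W where
  pre : Set W → Form A (A × Val)

/-- The product update of a simplicial model `M` with a simplicial action model `Act`:
the subcomplex of the chromatic cartesian product induced by the products `X × Y` of a
facet `X` of `M` and a facet (action) `Y` of `Act` such that `pre(Y)` holds at `X`.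
Labels are inherited from the first component. -/
def SModel.update {A V W Val : Type} (M : SModel A V Val) (Act : SActModel A W Val) :
    SModel A (V × W) Val where
  simplexes := {Z | Z.Nonempty ∧ ∃ X Y, M.toCSC.IsFacet X ∧ Act.toCSC.IsFacet Y ∧
    M.sat X (Act.pre Y) ∧ Z ⊆ chromPair M.color Act.color X Y}
  nonempty_mem _ h := h.1
  finite_mem Z h := by
    obtain ⟨-, X, Y, hX, hY, -, hsub⟩ := h
    exact (((M.toCSC.finite_mem X hX.1).prod (Act.toCSC.finite_mem Y hY.1)).subset
      (fun p hp => Set.mk_mem_prod hp.1 hp.2.1)).subset hsub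
  down_closed Z hZ Y' hsub hne := by
    obtain ⟨-, X, Y, hX, hY, hpre, hZsub⟩ := hZ
    exact ⟨hne, X, Y, hX, hY, hpre, hsub.trans hZsub⟩
  color p := M.color p.1
  chromatic := by
    rintro Z ⟨-, X, Y, hX, hY, -, hsub⟩ p hp q hq hc
    obtain ⟨hp1, hp2, hpc⟩ := hsub hp
    obtain ⟨hq1, hq2, hqc⟩ := hsub hq
    have h1 : p.1 = q.1 := M.toCSC.chromatic X hX.1 hp1 hq1 hc
    have h2 : p.2 = q.2 := Act.toCSC.chromatic Y hY.1 hp2 hq2 (by rw [← hpc, ← hqc, h1])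
    exact Prod.ext h1 h2
  label p := M.label p.1
  label_local := by
    rintro ⟨u, w⟩ hv p hp
    obtain ⟨-, X, Y, hX, hY, -, hsub⟩ := hv
    have hu : u ∈ X := (hsub (Set.mem_singleton _)).1
    exact M.label_local u (M.toCSC.isVertex_of_mem hX.1 hu) p hp

/-- The product update of pure simplicial models is pure: its facets are exactly the
chromatic products `X × Y` of enabled pairs of facets. -/
lemma SModel.update_pure {n : ℕ} {V W Val : Type} (M : SModel (Fin (n+1)) V Val)
    (Act : SActModel (Fin (n+1)) W Val) (hpM : M.toCSC.Pure n)
    (hpA : Act.toCSC.Pure n) : (M.update Act).toCSC.Pure n := by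
  rintro Z ⟨⟨-, X, Y, hX, hY, hpre, hsub⟩, hmax⟩
  have hne : (chromPair M.color Act.color X Y).Nonempty :=
    M.toCSC.chromPair_nonempty Act.toCSC hpA hX hY
  have hmem : chromPair M.color Act.color X Y ∈ (M.update Act).simplexes :=
    ⟨hne, X, Y, hX, hY, hpre, subset_rfl⟩
  have hZ : Z = chromPair M.color Act.color X Y := hmax _ hmem hsub
  rw [hZ]
  exact M.toCSC.ncard_chromPair Act.toCSC hpM hpA hX hY

/-! ### The input simplicial model and the consensus task -/

/-- The input simplicial model: each agent independently receives an input value in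
`Val`. The vertex `(a, x)` means "agent `a` has input `x`", labeled by the corresponding
atomic proposition; simplexes are the partial input assignments, so facets are the total
input assignments. -/
def inputModel (n : ℕ) (Val : Type) : SModel (Fin (n+1)) (Fin (n+1) × Val) Val where
  simplexes := {X | X.Nonempty ∧ Set.InjOn Prod.fst X}
  nonempty_mem _ h := h.1
  finite_mem X h := Set.Finite.of_finite_image (Set.toFinite _) h.2
  down_closed X hX Y hYX hY := ⟨hY, hX.2.mono hYX⟩
  color := Prod.fst
  chromatic _ h := h.2
  label p := {p}
  label_local := by
    rintro v _ p hp
    rw [Set.mem_singleton_iff] at hp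
    rw [hp]

/-- The formula `φ_x`: "at least one agent has input `x`". -/
def someone (n : ℕ) {Val : Type} [Inhabited Val] (x : Val) :
    Form (Fin (n+1)) (Fin (n+1) × Val) :=
  bigOr ((List.finRange (n+1)).map fun a => Form.atom (a, x))

/-- The decision assignment where every agent decides the value `x`. -/
def allDecide (n : ℕ) {Val : Type} (x : Val) : Set (Fin (n+1) × Val) := {p | p.2 = x}

open Classical in
/-- The binary consensus task, as a simplicial action model: it has exactly two facets,
`X_0 = allDecide false` (every agent decides `0`, with precondition "someone has input
`0`", i.e. true at every input facet except the all-`1` one) and `X_1 = allDecide true`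
(symmetrically). -/
noncomputable def consensusTask (n : ℕ) :
    SActModel (Fin (n+1)) (Fin (n+1) × Bool) Bool where
  simplexes := {Z | Z.Nonempty ∧ Set.InjOn Prod.fst Z ∧ ∃ b : Bool, ∀ p ∈ Z, p.2 = b}
  nonempty_mem _ h := h.1
  finite_mem Z h := Set.Finite.of_finite_image (Set.toFinite _) h.2.1
  down_closed Z hZ Y hYZ hY :=
    ⟨hY, hZ.2.1.mono hYZ, hZ.2.2.imp fun b hb p hp => hb p (hYZ hp)⟩
  color := Prod.fst
  chromatic _ h := h.2.1
  pre Z := if ∃ p ∈ Z, p.2 = true then someone n true else someone n false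

/-- A sequential partition of the agents `Fin (n+1)`, encoded by its rank function `ord`:
the concurrency classes are the fibers of `ord`, ordered by rank, and the ranks occurring
form an initial segment of `ℕ`. -/
def IsSeqPart {n : ℕ} (ord : Fin (n+1) → ℕ) : Prop :=
  ∀ (a : Fin (n+1)) (k : ℕ), k ≤ ord a → ∃ b, ord b = k

/-! ### The one-round immediate snapshot action model over the input model -/

/-- The view of agent `a` in the immediate snapshot with schedule `ord` and input
assignment `κ`: agent `a` sees the input pairs of exactly the agents of rank at most
its own. -/
def isView {n : ℕ} {Val : Type} (κ : Fin (n+1) → Val) (ord : Fin (n+1) → ℕ)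
    (a : Fin (n+1)) : Set (Fin (n+1) × Val) :=
  {p | ord p.1 ≤ ord a ∧ p.2 = κ p.1}

/-- The immediate snapshot action `c^X` for the input assignment `κ` (determining the
input facet `X`) and the sequential partition `ord`: the set of vertices `⟨a, view_a⟩`. -/
def isAction {n : ℕ} {Val : Type} (κ : Fin (n+1) → Val) (ord : Fin (n+1) → ℕ) :
    Set (Fin (n+1) × Set (Fin (n+1) × Val)) :=
  Set.range fun a => (a, isView κ ord a)

open Classical in
/-- The one-round immediate snapshot action model over the input model `inputModel n Val`:
one action `c^X` for each input facet `X` and each sequential partition `c`, whose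
precondition is true exactly at `X`; vertices of different actions carrying the same pair
`⟨agent, view⟩` are identified. -/
noncomputable def ISact (n : ℕ) (Val : Type) [Inhabited Val] :
    SActModel (Fin (n+1)) (Fin (n+1) × Set (Fin (n+1) × Val)) Val where
  simplexes := {Z | Z.Nonempty ∧ ∃ κ ord, IsSeqPart ord ∧ Z ⊆ isAction κ ord}
  nonempty_mem _ h := h.1
  finite_mem Z h := by
    obtain ⟨-, κ, ord, -, hsub⟩ := h
    exact (Set.finite_range _).subset hsub
  down_closed Z hZ Y hYZ hY := by
    obtain ⟨-, κ, ord, hord, hsub⟩ := hZ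
    exact ⟨hY, κ, ord, hord, hYZ.trans hsub⟩
  color := Prod.fst
  chromatic := by
    rintro Z ⟨-, κ, ord, -, hsub⟩ p hp q hq hc
    obtain ⟨a, ha⟩ := hsub hp
    obtain ⟨b, hb⟩ := hsub hq
    rw [← ha, ← hb] at hc ⊢
    dsimp at hc
    rw [hc]
  pre Z :=
    if h : ∃ κ ord, IsSeqPart ord ∧ Z = isAction κ ord then
      bigAnd ((List.finRange (n+1)).map fun a => Form.atom (a, h.choose a))
    else Form.falsum

/-! ### The 2-set agreement task for three agents -/

open Classical in
/-- The 2-set agreement task for the three agents `Fin 3` with values in `{0,1,2} = Fin 3`: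
its facets are the decision assignments `X_{d₀,d₁,d₂}` using at most `2` distinct values,
with precondition `φ_{d₀} ∧ φ_{d₁} ∧ φ_{d₂}` ("every decided value is some agent's
input"). -/
noncomputable def setAgreementTask : SActModel (Fin 3) (Fin 3 × Fin 3) (Fin 3) where
  simplexes := {Z | Z.Nonempty ∧ Set.InjOn Prod.fst Z ∧ (Prod.snd '' Z).ncard ≤ 2}
  nonempty_mem _ h := h.1
  finite_mem Z h := Set.Finite.of_finite_image (Set.toFinite _) h.2.1
  down_closed Z hZ Y hYZ hY := ⟨hY, hZ.2.1.mono hYZ,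
    le_trans (Set.ncard_le_ncard (Set.image_mono hYZ) (Set.toFinite _)) hZ.2.2⟩
  color := Prod.fst
  chromatic _ h := h.2.1
  pre Z :=
    if h : ∃ d : Fin 3 → Fin 3, Z = {p : Fin 3 × Fin 3 | p.2 = d p.1} then
      bigAnd ((List.finRange 3).map fun a => someone 2 (h.choose a))
    else Form.falsum


/-!
Restricted to the inputs where every agent's input is its own name, a protocol `δ` colors each
vertex `(a, S)` of the chromatic subdivision of the triangle (agent `a` having seen the agents `S`)
by `a`'s decision. Validity of the task makes this a Sperner coloring: the decision lies in `S`,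
as one sees by giving the unseen agents the input `a`. Agreement on at most two values says that
no run of `IS`, i.e. no triangle of the subdivision, is rainbow. This contradicts Sperner's lemma,
which for the thirteen triangles is a finite check.
-/

open Set

namespace SModel

variable {A V Val : Type} [Inhabited (A × Val)] (M : SModel A V Val) (X : Set V)

lemma sat_bigAnd (l : List (Form A (A × Val))) : M.sat X (bigAnd l) ↔ ∀ φ ∈ l, M.sat X φ := by
  induction l with
  | nil => simp [bigAnd, Form.verum, Form.falsum, sat]
  | cons φ l ih => simp [bigAnd, sat, ← ih]

lemma sat_bigOr (l : List (Form A (A × Val))) : M.sat X (bigOr l) ↔ ∃ φ ∈ l, M.sat X φ := by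
  induction l with
  | nil => simp [bigOr, Form.falsum, sat]
  | cons φ l ih =>
    change ¬(¬M.sat X φ ∧ ¬M.sat X (bigOr l)) ↔ _
    rw [List.exists_mem_cons_iff, ← ih, not_and_or, not_not, not_not]

end SModel

lemma sat_someone {n : ℕ} {V Val : Type} [Inhabited Val] (M : SModel (Fin (n+1)) V Val)
    (X : Set V) (x : Val) : M.sat X (someone n x) ↔ ∃ a, ∃ v ∈ X, (a, x) ∈ M.label v := by
  simp [someone, SModel.sat_bigOr, SModel.sat]

lemma inputModel_sat_atom {n : ℕ} {Val : Type} (X : Set (Fin (n+1) × Val))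
    (p : Fin (n+1) × Val) : (inputModel n Val).sat X (.atom p) ↔ p ∈ X := by
  simp [SModel.sat, inputModel]

lemma CSC.isFacet_of_ncard_eq {n : ℕ} {V : Type} (C : CSC (Fin (n+1)) V) {X : Set V}
    (hX : X ∈ C.simplexes) (h : X.ncard = n + 1) : C.IsFacet X :=
  ⟨hX, fun Y hY hXY => eq_of_subset_of_ncard_le hXY (h ▸ C.ncard_le_of_mem hY) (C.finite_mem Y hY)⟩

lemma exists_subset_graphOn_of_injOn {α β : Type} {Z : Set (α × β)} (hZ : Z.Nonempty)
    (hinj : InjOn Prod.fst Z) : ∃ d : α → β, Z ⊆ univ.graphOn d ∧ range d ⊆ Prod.snd '' Z := by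
  classical
  obtain ⟨p₀, hp₀⟩ := hZ
  let d a := if h : ∃ x, (a, x) ∈ Z then h.choose else p₀.2
  have hd : ∀ a x, (a, x) ∈ Z → d a = x := fun a x hx => by
    have h : ∃ x, (a, x) ∈ Z := ⟨x, hx⟩
    simp only [d, dif_pos h]
    exact congrArg Prod.snd (hinj h.choose_spec hx rfl)
  refine ⟨d, fun p hp => by simpa using hd p.1 p.2 hp, ?_⟩
  rintro _ ⟨a, rfl⟩
  by_cases h : ∃ x, (a, x) ∈ Z
  · exact ⟨(a, h.choose), h.choose_spec, (hd a _ h.choose_spec).symm⟩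
  · exact ⟨p₀, hp₀, by simp only [d, dif_neg h]⟩

section InputModel

variable {n : ℕ} {Val : Type}

lemma inputModel_isFacet_graphOn (κ : Fin (n+1) → Val) :
    (inputModel n Val).IsFacet (univ.graphOn κ) :=
  CSC.isFacet_of_ncard_eq _ ⟨by simp, fst_injOn_graph⟩ (by simp)

lemma exists_eq_graphOn_of_isFacet_inputModel {X : Set (Fin (n+1) × Val)}
    (hX : (inputModel n Val).IsFacet X) : ∃ κ, X = univ.graphOn κ := by
  obtain ⟨κ, hsub, -⟩ := exists_subset_graphOn_of_injOn hX.1.1 hX.1.2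
  exact ⟨κ, hX.2 _ (inputModel_isFacet_graphOn κ).1 hsub⟩

end InputModel

section ImmediateSnapshot

variable {n : ℕ} {Val : Type} {ord : Fin (n+1) → ℕ}

lemma isAction_eq_graphOn (κ : Fin (n+1) → Val) (ord : Fin (n+1) → ℕ) :
    isAction κ ord = univ.graphOn (isView κ ord) :=
  graphOn_univ_eq_range.symm

lemma eq_of_isAction_eq {κ κ' : Fin (n+1) → Val} {ord' : Fin (n+1) → ℕ}
    (h : isAction κ ord = isAction κ' ord') : κ = κ' := by
  funext a
  obtain ⟨b, hb⟩ : (a, isView κ ord a) ∈ isAction κ' ord' := h ▸ ⟨a, rfl⟩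
  obtain ⟨rfl, hview⟩ := Prod.mk.inj hb
  have hself : (b, κ b) ∈ isView κ ord b := ⟨le_rfl, rfl⟩
  exact (hview ▸ hself).2

variable [Inhabited Val]

lemma isAction_isFacet (κ : Fin (n+1) → Val) (hord : IsSeqPart ord) :
    (ISact n Val).IsFacet (isAction κ ord) :=
  CSC.isFacet_of_ncard_eq _ ⟨range_nonempty _, κ, ord, hord, subset_rfl⟩
    (by simp [isAction_eq_graphOn])

lemma ISact_pre_isAction (κ : Fin (n+1) → Val) (hord : IsSeqPart ord) :
    (ISact n Val).pre (isAction κ ord) =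
      bigAnd ((List.finRange (n+1)).map fun a => Form.atom (a, κ a)) := by
  have h : ∃ κ' ord', IsSeqPart ord' ∧ isAction κ ord = isAction κ' ord' := ⟨κ, ord, hord, rfl⟩
  have hκ : h.choose = κ := (eq_of_isAction_eq h.choose_spec.choose_spec.2).symm
  simp only [ISact, dif_pos h, hκ]

lemma run_mem_update_ISact (κ : Fin (n+1) → Val) (hord : IsSeqPart ord) :
    (range fun a => ((a, κ a), (a, isView κ ord a))) ∈
      ((inputModel n Val).update (ISact n Val)).simplexes := by
  refine ⟨range_nonempty _, _, _, inputModel_isFacet_graphOn κ, isAction_isFacet κ hord, ?_, ?_⟩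
  · simp [ISact_pre_isAction κ hord, SModel.sat_bigAnd, inputModel_sat_atom]
  · rintro _ ⟨a, rfl⟩
    exact ⟨by simp, ⟨a, rfl⟩, rfl⟩

end ImmediateSnapshot

section SetAgreement

lemma exists_eq_graphOn_of_isFacet_setAgreementTask {Y : Set (Fin 3 × Fin 3)}
    (hY : setAgreementTask.IsFacet Y) : ∃ d, Y = univ.graphOn d ∧ (range d).ncard ≤ 2 := by
  obtain ⟨⟨hne, hinj, hcard⟩, hmax⟩ := hY
  obtain ⟨d, hsub, hrange⟩ := exists_subset_graphOn_of_injOn hne hinj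
  have hd : (range d).ncard ≤ 2 := (ncard_le_ncard hrange (toFinite _)).trans hcard
  refine ⟨d, hmax _ ⟨by simp, fst_injOn_graph, by simpa [image_univ] using hd⟩ hsub, hd⟩

lemma setAgreementTask_pre_graphOn (d : Fin 3 → Fin 3) :
    setAgreementTask.pre (univ.graphOn d) =
      bigAnd ((List.finRange 3).map fun a => someone 2 (d a)) := by
  have h : ∃ d' : Fin 3 → Fin 3, univ.graphOn d = {p : Fin 3 × Fin 3 | p.2 = d' p.1} :=
    ⟨d, by ext; simp [eq_comm]⟩
  have hd : h.choose = d := by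
    funext a
    have ha : (a, d a) ∈ univ.graphOn d := by simp
    rw [h.choose_spec] at ha
    exact ha.symm
  simp only [setAgreementTask, dif_pos h, hd]

lemma exists_decisions_of_mem_update_setAgreementTask
    {Z : Set ((Fin 3 × Fin 3) × (Fin 3 × Fin 3))}
    (hZ : Z ∈ ((inputModel 2 (Fin 3)).update setAgreementTask).simplexes) :
    ∃ κ d : Fin 3 → Fin 3, (∀ a, ∃ b, d a = κ b) ∧ (range d).ncard ≤ 2 ∧
      Z ⊆ range fun a => ((a, κ a), (a, d a)) := by
  obtain ⟨-, X, Y, hX, hY, hpre, hsub⟩ := hZ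
  obtain ⟨κ, rfl⟩ := exists_eq_graphOn_of_isFacet_inputModel hX
  obtain ⟨d, rfl, hd⟩ := exists_eq_graphOn_of_isFacet_setAgreementTask hY
  refine ⟨κ, d, fun a => ?_, hd, fun p hp => ?_⟩
  · rw [setAgreementTask_pre_graphOn, SModel.sat_bigAnd] at hpre
    obtain ⟨b, v, hv, hbv⟩ :=
      (sat_someone _ _ _).1 (hpre _ (List.mem_map_of_mem (List.mem_finRange a)))
    obtain rfl : (b, d a) = v := hbv
    exact ⟨b, by simpa [eq_comm] using hv⟩
  · obtain ⟨h1, h2, hc⟩ := hsub hp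
    simp only [mem_graphOn, mem_univ, true_and] at h1 h2
    exact ⟨p.1.1, by ext <;> simp_all [inputModel, setAgreementTask]⟩

end SetAgreement

def SolvesSetAgreement
    (δ : (Fin 3 × Fin 3) × (Fin 3 × Set (Fin 3 × Fin 3)) → (Fin 3 × Fin 3) × (Fin 3 × Fin 3)) :
    Prop :=
  ((inputModel 2 (Fin 3)).update (ISact 2 (Fin 3))).IsMorphism
    ((inputModel 2 (Fin 3)).update setAgreementTask) δ ∧
  ∀ p, ((inputModel 2 (Fin 3)).update (ISact 2 (Fin 3))).toCSC.IsVertex p → (δ p).1 = p.1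

def agentView {n : ℕ} (ord : Fin (n+1) → ℕ) (a : Fin (n+1)) : Finset (Fin (n+1)) :=
  Finset.univ.filter fun b => ord b ≤ ord a

/-- Agent `a`'s decision after seeing exactly the agents in `S`, every agent's input being its
own name. -/
def decision
    (δ : (Fin 3 × Fin 3) × (Fin 3 × Set (Fin 3 × Fin 3)) → (Fin 3 × Fin 3) × (Fin 3 × Fin 3))
    (a : Fin 3) (S : Finset (Fin 3)) : Fin 3 :=
  (δ ((a, a), (a, {p | p.1 ∈ S ∧ p.2 = p.1}))).2.2

namespace SolvesSetAgreement

variable {δ : (Fin 3 × Fin 3) × (Fin 3 × Set (Fin 3 × Fin 3)) → (Fin 3 × Fin 3) × (Fin 3 × Fin 3)}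
  {ord : Fin 3 → ℕ}

lemma exists_decisions (h : SolvesSetAgreement δ) (κ : Fin 3 → Fin 3) (hord : IsSeqPart ord) :
    ∃ d : Fin 3 → Fin 3, (∀ a, (δ ((a, κ a), (a, isView κ ord a))).2.2 = d a) ∧
      (∀ a, ∃ b, d a = κ b) ∧ (range d).ncard ≤ 2 := by
  have hrun := run_mem_update_ISact κ hord
  obtain ⟨κ', d, hvalid, hcard, hsub⟩ :=
    exists_decisions_of_mem_update_setAgreementTask (h.1.1.1 _ hrun)
  have hvertex (a : Fin 3) : κ' a = κ a ∧ (δ ((a, κ a), (a, isView κ ord a))).2.2 = d a := by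
    obtain ⟨b, hb⟩ := hsub (mem_image_of_mem δ (mem_range_self a))
    have hfst := h.2 _ (CSC.isVertex_of_mem _ hrun (mem_range_self a))
    rw [← hb] at hfst ⊢
    obtain ⟨rfl, hκ⟩ := Prod.mk.inj hfst
    exact ⟨hκ, rfl⟩
  refine ⟨d, fun a => (hvertex a).2, fun a => ?_, hcard⟩
  obtain ⟨b, hb⟩ := hvalid a
  exact ⟨b, hb.trans (hvertex b).1⟩

lemma decision_mem (h : SolvesSetAgreement δ) {a : Fin 3} {S : Finset (Fin 3)} (ha : a ∈ S) :
    decision δ a S ∈ S := by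
  -- Let the agents outside `S` have input `a` and move after those in `S`: the view of `a` is
  -- unchanged and every input lies in `S`.
  let κ b := if b ∈ S then b else a
  let ord b := if b ∈ S then 0 else 1
  have hord : IsSeqPart ord := by
    intro b k hk
    rcases Nat.le_one_iff_eq_zero_or_eq_one.1 (hk.trans (by simp only [ord]; split <;> omega))
      with rfl | rfl
    · exact ⟨a, if_pos ha⟩
    · exact ⟨b, le_antisymm (by simp only [ord]; split <;> omega) hk⟩
  obtain ⟨d, hdec, hvalid, -⟩ := h.exists_decisions κ hord
  have hview : isView κ ord a = {p | p.1 ∈ S ∧ p.2 = p.1} := by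
    ext ⟨b, x⟩
    by_cases hb : b ∈ S <;> simp [isView, κ, ord, hb, ha]
  have hda : decision δ a S = d a := by
    simpa [decision, hview, κ, ha] using hdec a
  obtain ⟨b, hb⟩ := hvalid a
  rw [hda, hb]
  by_cases hbS : b ∈ S <;> simp [κ, hbS, ha]

lemma not_nodup_decisions (h : SolvesSetAgreement δ) (hord : IsSeqPart ord) :
    ¬ [decision δ 0 (agentView ord 0), decision δ 1 (agentView ord 1),
      decision δ 2 (agentView ord 2)].Nodup := by
  obtain ⟨d, hdec, -, hcard⟩ := h.exists_decisions id hord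
  have hd (a : Fin 3) : decision δ a (agentView ord a) = d a := by
    have hview : isView id ord a = {p | p.1 ∈ agentView ord a ∧ p.2 = p.1} := by
      ext
      simp [isView, agentView]
    rw [← hdec a, hview]
    rfl
  intro hnodup
  simp only [hd, List.nodup_cons, List.mem_cons, not_or] at hnodup
  have h3 : ({d 0, d 1, d 2} : Set (Fin 3)).ncard = 3 :=
    ncard_eq_three.2 ⟨_, _, _, hnodup.1.1, hnodup.1.2.1, hnodup.2.1.1, rfl⟩
  have hsub : ({d 0, d 1, d 2} : Set (Fin 3)) ⊆ range d := by
    simp [insert_subset_iff]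
  have := ncard_le_ncard hsub
  omega

end SolvesSetAgreement

instance {n : ℕ} : DecidablePred (@IsSeqPart n) := fun ord =>
  inferInstanceAs (Decidable (∀ (a : Fin (n+1)) (k : ℕ), k ≤ ord a → ∃ b, ord b = k))

/- The variables are the colors of the twelve vertices `(a, S)` of the chromatic subdivision of
a triangle (`cₐ` at `(a, {a})`, `qₐᵦ` at `(a, {a, b})`, `uₐ` at `(a, univ)`), each in its
carrier `S`; the disjuncts are its thirteen triangles. -/
set_option synthInstance.maxSize 2000 in
lemma sperner_chromatic_subdivision :
    ∀ c₀ ∈ ({0} : Finset (Fin 3)), ∀ c₁ ∈ ({1} : Finset (Fin 3)), ∀ c₂ ∈ ({2} : Finset (Fin 3)),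
    ∀ q₀₁ ∈ ({0, 1} : Finset (Fin 3)), ∀ q₁₀ ∈ ({0, 1} : Finset (Fin 3)),
    ∀ q₀₂ ∈ ({0, 2} : Finset (Fin 3)), ∀ q₂₀ ∈ ({0, 2} : Finset (Fin 3)),
    ∀ q₁₂ ∈ ({1, 2} : Finset (Fin 3)), ∀ q₂₁ ∈ ({1, 2} : Finset (Fin 3)), ∀ u₀ u₁ u₂ : Fin 3,
    [u₀, u₁, u₂].Nodup ∨ [c₀, u₁, u₂].Nodup ∨ [u₀, c₁, u₂].Nodup ∨ [u₀, u₁, c₂].Nodup ∨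
    [q₀₁, q₁₀, u₂].Nodup ∨ [q₀₂, u₁, q₂₀].Nodup ∨ [u₀, q₁₂, q₂₁].Nodup ∨
    [c₀, q₁₀, u₂].Nodup ∨ [q₀₁, c₁, u₂].Nodup ∨ [c₀, u₁, q₂₀].Nodup ∨ [q₀₂, u₁, c₂].Nodup ∨
    [u₀, c₁, q₂₁].Nodup ∨ [u₀, q₁₂, c₂].Nodup := by
  decide

lemma exists_run_nodup (f : Fin 3 → Finset (Fin 3) → Fin 3) (hf : ∀ a S, a ∈ S → f a S ∈ S) :
    ∃ ord, IsSeqPart ord ∧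
      [f 0 (agentView ord 0), f 1 (agentView ord 1), f 2 (agentView ord 2)].Nodup := by
  rcases sperner_chromatic_subdivision
    _ (hf 0 {0} (by decide)) _ (hf 1 {1} (by decide)) _ (hf 2 {2} (by decide))
    _ (hf 0 {0, 1} (by decide)) _ (hf 1 {0, 1} (by decide))
    _ (hf 0 {0, 2} (by decide)) _ (hf 2 {0, 2} (by decide))
    _ (hf 1 {1, 2} (by decide)) _ (hf 2 {1, 2} (by decide)) (f 0 .univ) (f 1 .univ) (f 2 .univ)
    with h | h | h | h | h | h | h | h | h | h | h | h | h
  · exact ⟨![0, 0, 0], by decide, h⟩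
  · exact ⟨![0, 1, 1], by decide, h⟩
  · exact ⟨![1, 0, 1], by decide, h⟩
  · exact ⟨![1, 1, 0], by decide, h⟩
  · exact ⟨![0, 0, 1], by decide, h⟩
  · exact ⟨![0, 1, 0], by decide, h⟩
  · exact ⟨![1, 0, 0], by decide, h⟩
  · exact ⟨![0, 1, 2], by decide, h⟩
  · exact ⟨![1, 0, 2], by decide, h⟩
  · exact ⟨![0, 2, 1], by decide, h⟩
  · exact ⟨![1, 2, 0], by decide, h⟩
  · exact ⟨![2, 0, 1], by decide, h⟩
  · exact ⟨![2, 1, 0], by decide, h⟩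

/-- The 2-set agreement task for three agents is not solvable by the
one-round immediate snapshot action model `IS`: there is no morphism of simplicial models
`δ : I[IS] → I[𝒯]` commuting with the projections to the input model `I` (inputs in
`{0,1,2}`). -/
theorem statement18 :
    ¬ ∃ δ : (Fin 3 × Fin 3) × (Fin 3 × Set (Fin 3 × Fin 3)) →
            (Fin 3 × Fin 3) × (Fin 3 × Fin 3),
        ((inputModel 2 (Fin 3)).update (ISact 2 (Fin 3))).IsMorphism
          ((inputModel 2 (Fin 3)).update setAgreementTask) δ ∧
        ∀ p, ((inputModel 2 (Fin 3)).update (ISact 2 (Fin 3))).toCSC.IsVertex p →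
          (δ p).1 = p.1 := by
  rintro ⟨δ, hδ⟩
  obtain ⟨ord, hord, hnodup⟩ :=
    exists_run_nodup (decision δ) fun _ _ ha => SolvesSetAgreement.decision_mem hδ ha
  exact SolvesSetAgreement.not_nodup_decisions hδ hord hnodup
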